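/- For every h < 3, no h-HAM system near-perfectly assembles the discrete Sierpinski triangle S_∞ with respect to its stage sequence S_0 ⊆ S_1 ⊆ S_2 ⊆ ⋯; that is, at least 3 hands are required for near-perfect assembly of the Sierpinski triangle. -/

import Mathlib

/-- A tile type: one glue (a natural number) per side. Glue 0 is the null glue. -/
structure Tile where
  north : ℕ
  east : ℕ
  south : ℕ
  west : ℕ
deriving DecidableEq

/-- An assembly: a nonempty finite set of positions in ℤ², each carrying a tile.
(The `tile` function is only meaningful on `dom`.) -/
structure Assembly where
  dom : Finset (ℤ × ℤ)
  tile : ℤ × ℤ → Tile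
  nonempty : dom.Nonempty

/-- The translation of an assembly by a vector `v`. -/
def Assembly.translate (A : Assembly) (v : ℤ × ℤ) : Assembly where
  dom := A.dom.image (· + v)
  tile := fun p => A.tile (p - v)
  nonempty := A.nonempty.image _

/-- Interaction strength between a tile `t` at position `p` and a tile `u` at
position `p + d`: the strength of the common glue on the abutting sides if the
glues match, and `0` otherwise (also `0` if the positions are not adjacent). -/
def bondStrength (str : ℕ → ℕ) (t u : Tile) (d : ℤ × ℤ) : ℕ :=
  if d = (1, 0) then (if t.east = u.west then str t.east else 0)
  else if d = (-1, 0) then (if t.west = u.east then str t.west else 0)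
  else if d = (0, 1) then (if t.north = u.south then str t.north else 0)
  else if d = (0, -1) then (if t.south = u.north then str t.south else 0)
  else 0

/-- The total strength of the bonds crossing the cut `(P, Q)` of an assembly. -/
def cutStrength (str : ℕ → ℕ) (A : Assembly) (P Q : Finset (ℤ × ℤ)) : ℕ :=
  ∑ p ∈ P, ∑ q ∈ Q, bondStrength str (A.tile p) (A.tile q) (q - p)

/-- An assembly is `τ`-stable if every partition of its domain into two nonempty
parts is crossed by bonds of total strength at least `τ`. -/
def IsStable (str : ℕ → ℕ) (τ : ℕ) (A : Assembly) : Prop :=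
  ∀ P Q : Finset (ℤ × ℤ), P.Nonempty → Q.Nonempty → Disjoint P Q → P ∪ Q = A.dom →
    τ ≤ cutStrength str A P Q

/-- `Combines L C` : the assemblies in the list `L` have pairwise disjoint domains
and `C` is their union. -/
def Combines (L : List Assembly) (C : Assembly) : Prop :=
  List.Pairwise (fun A B => Disjoint A.dom B.dom) L ∧
  (∀ p ∈ C.dom, ∃ A ∈ L, p ∈ A.dom) ∧
  (∀ A ∈ L, A.dom ⊆ C.dom ∧ ∀ p ∈ A.dom, C.tile p = A.tile p)

/-- Producible assemblies of the `h`-HAM system `(T, τ, h)` (with glue strengths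
`str`): the least set of assemblies containing every single tile of `T` placed at
any position of ℤ², and closed under taking `τ`-stable unions of at most `h`
suitably translated producible assemblies with pairwise disjoint domains. -/
inductive HamProducible (T : Finset Tile) (str : ℕ → ℕ) (τ h : ℕ) : Assembly → Prop
  | single (t : Tile) (ht : t ∈ T) (p : ℤ × ℤ) :
      HamProducible T str τ h ⟨{p}, fun _ => t, Finset.singleton_nonempty p⟩
  | combine (L : List (Assembly × (ℤ × ℤ))) (C : Assembly) :
      L.length ≤ h →
      (∀ x ∈ L, HamProducible T str τ h x.1) →
      Combines (L.map fun x => x.1.translate x.2) C →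
      IsStable str τ C →
      HamProducible T str τ h C

/-- The `h`-HAM system `(T, τ, h)` (finitely) self-assembles the shape `X ⊆ ℤ²`:
every producible assembly `A` admits an infinite sequence of producible
assemblies starting at `A`, each obtained from the previous one as a `τ`-stable
union with at most `h - 1` other (suitably translated) producible assemblies,
whose domains union to exactly a translate of `X`. -/
def SelfAssembles (T : Finset Tile) (str : ℕ → ℕ) (τ h : ℕ) (X : Set (ℤ × ℤ)) : Prop :=
  ∀ A, HamProducible T str τ h A →
    ∃ seq : ℕ → Assembly, seq 0 = A ∧
      (∀ n, HamProducible T str τ h (seq n)) ∧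
      (∀ n, ∃ L : List (Assembly × (ℤ × ℤ)), L.length ≤ h - 1 ∧
        (∀ x ∈ L, HamProducible T str τ h x.1) ∧
        Combines (seq n :: L.map fun x => x.1.translate x.2) (seq (n + 1)) ∧
        IsStable str τ (seq (n + 1))) ∧
      ∃ v : ℤ × ℤ, (⋃ n, ((seq n).dom : Set (ℤ × ℤ))) = (· + v) '' X

/-- The `h`-HAM system `(T, τ, h)` near-perfectly assembles the fractal with
increasing stage sequence `P 0 ⊆ P 1 ⊆ ⋯`: it self-assembles `⋃ i, P i`, and
(1) for some constant `c`, every stage `P i` is matched, up to translation, by a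
producible assembly whose domain is a subset of `P i` missing at most `c` points;
(2) for some constant `c'`, every producible assembly has a translate whose
domain is a subset of some stage `P i` missing at most `c'` points. -/
def NearPerfectlyAssembles (T : Finset Tile) (str : ℕ → ℕ) (τ h : ℕ)
    (P : ℕ → Finset (ℤ × ℤ)) : Prop :=
  SelfAssembles T str τ h (⋃ i, (P i : Set (ℤ × ℤ))) ∧
  (∃ c : ℕ, ∀ i : ℕ, ∃ A, HamProducible T str τ h A ∧ ∃ v : ℤ × ℤ,
      (A.translate v).dom ⊆ P i ∧ (P i \ (A.translate v).dom).card ≤ c) ∧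
  (∃ c' : ℕ, ∀ A, HamProducible T str τ h A → ∃ (v : ℤ × ℤ) (i : ℕ),
      (A.translate v).dom ⊆ P i ∧ (P i \ (A.translate v).dom).card ≤ c')

/-- Stages of the discrete (non-tree) Sierpinski triangle:
`S_0 = {(0,0),(-1,0),(0,1),(-1,1)}` and
`S_{i+1} = S_i ∪ (S_i + 2^i·(1,2)) ∪ (S_i + 2^i·(-1,2))`. -/
def sierpTri : ℕ → Finset (ℤ × ℤ)
  | 0 => {(0, 0), (-1, 0), (0, 1), (-1, 1)}
  | i + 1 =>
      sierpTri i ∪ (sierpTri i).image (· + ((2 : ℤ) ^ i, 2 ^ (i + 1))) ∪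
        (sierpTri i).image (· + (-(2 : ℤ) ^ i, 2 ^ (i + 1)))

/-- The discrete Sierpinski triangle `S_∞ = ⋃ i, S_i`. -/
def sierpTriInf : Set (ℤ × ℤ) := ⋃ i, (sierpTri i : Set (ℤ × ℤ))

/-- The offset set `V` for the Sierpinski carpet. -/
def carpetV : Finset (ℤ × ℤ) := {(1,0), (0,1), (0,2), (2,0), (1,2), (2,1), (2,2)}

/-- Stages of the discrete Sierpinski carpet:
`C_0 = {(0,0)}` and `C_{i+1} = C_i ∪ ⋃_{v ∈ V} (C_i + 3^i·v)`. -/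
def sierpCarpet : ℕ → Finset (ℤ × ℤ)
  | 0 => {(0, 0)}
  | i + 1 =>
      sierpCarpet i ∪ carpetV.biUnion fun v =>
        (sierpCarpet i).image (· + ((3 : ℤ) ^ i * v.1, (3 : ℤ) ^ i * v.2))

/-- The discrete Sierpinski carpet `C_∞ = ⋃ i, C_i`. -/
def sierpCarpetInf : Set (ℤ × ℤ) := ⋃ i, (sierpCarpet i : Set (ℤ × ℤ))

/-- The scale-factor-`c` version of a shape `X ⊆ ℤ²`: each point of `X` becomes a
`c × c` block (membership via floor division of both coordinates by `c`). -/
def scaleShape (c : ℤ) (X : Set (ℤ × ℤ)) : Set (ℤ × ℤ) :=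
  {p | (Int.fdiv p.1 c, Int.fdiv p.2 c) ∈ X}


/-!
With at most two hands, an assembly is the union of at most two producible assemblies, while the
stages of the Sierpinski triangle triple in size. Condition (2) forces every producible assembly
to be, up to `c'` missing points, a whole stage. Once the stages are larger than `c'`, two pieces
of size at most `|S_k|` cannot fill up to `c'` points any stage beyond `S_k`, which has at least
`3 |S_k|` points, so no producible assembly is larger than `|S_k|`. This contradicts
condition (1), which demands producible assemblies filling arbitrarily large stages.
-/

lemma Assembly.card_translate (A : Assembly) (v : ℤ × ℤ) :
    (A.translate v).dom.card = A.dom.card :=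
  Finset.card_image_of_injective _ (add_left_injective v)

lemma card_le_length_mul_of_forall_mem_dom {L : List Assembly} {s : Finset (ℤ × ℤ)} {M : ℕ}
    (hcover : ∀ p ∈ s, ∃ A ∈ L, p ∈ A.dom) (hM : ∀ A ∈ L, A.dom.card ≤ M) :
    s.card ≤ L.length * M := by
  have hsub : s ⊆ Finset.univ.biUnion fun k : Fin L.length => L[k].dom := by
    intro p hp
    obtain ⟨A, hA, hpA⟩ := hcover p hp
    obtain ⟨k, rfl⟩ := List.get_of_mem hA
    exact Finset.mem_biUnion.2 ⟨k, Finset.mem_univ _, hpA⟩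
  calc s.card ≤ _ := Finset.card_le_card hsub
    _ ≤ Finset.univ.card * M :=
      Finset.card_biUnion_le_card_mul _ _ _ fun k _ => hM _ (List.getElem_mem _)
    _ = L.length * M := by rw [Finset.card_univ, Fintype.card_fin]

lemma HamProducible.card_le_of_gap {T : Finset Tile} {str : ℕ → ℕ} {τ h M : ℕ} (hM : 0 < M)
    (hgap : ∀ A, HamProducible T str τ h A → A.dom.card ≤ h * M → A.dom.card ≤ M)
    {A : Assembly} (hA : HamProducible T str τ h A) : A.dom.card ≤ M := by
  induction hA with
  | single => exact (Finset.card_singleton _).trans_le hM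
  | combine L C hlen hL hcomb hstab ih =>
    refine hgap C (.combine L C hlen hL hcomb hstab) ?_
    have hpieces : ∀ B ∈ L.map fun x => x.1.translate x.2, B.dom.card ≤ M := by
      simp only [List.mem_map]
      rintro _ ⟨x, hx, rfl⟩
      rw [Assembly.card_translate]
      exact ih x hx
    calc C.dom.card ≤ (L.map fun x => x.1.translate x.2).length * M :=
          card_le_length_mul_of_forall_mem_dom hcomb.2.1 hpieces
      _ ≤ h * M := by rw [List.length_map]; exact Nat.mul_le_mul_right M hlen

section Growth

variable {a : ℕ → ℕ} {h : ℕ}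

lemma lt_apply_of_succ_mul_le (hh : 0 < h) (h0 : 0 < a 0) (hg : ∀ i, (h + 1) * a i ≤ a (i + 1)) :
    ∀ i, i < a i
  | 0 => h0
  | i + 1 => by
    have := lt_apply_of_succ_mul_le hh h0 hg i
    have := hg i
    nlinarith

lemma le_of_near_of_succ_mul_le (hg : ∀ i, (h + 1) * a i ≤ a (i + 1)) {c' k j n : ℕ}
    (hk : c' < a k) (hn : n ≤ a j) (hnear : a j ≤ n + c') (hnk : n ≤ h * a k) : n ≤ a k := by
  have hmono : Monotone a := monotone_nat_of_le_succ fun i => by nlinarith [hg i]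
  rcases le_or_gt j k with hjk | hkj
  · exact hn.trans (hmono hjk)
  · have hbig : (h + 1) * a k ≤ a j := (hg k).trans (hmono hkj)
    rw [Nat.succ_mul] at hbig
    omega

end Growth

lemma card_le_card_add_of_translate_subset {A : Assembly} {v : ℤ × ℤ} {s : Finset (ℤ × ℤ)}
    {c : ℕ} (hsub : (A.translate v).dom ⊆ s) (hmiss : (s \ (A.translate v).dom).card ≤ c) :
    A.dom.card ≤ s.card ∧ s.card ≤ A.dom.card + c := by
  have := Finset.card_sdiff_add_card_eq_card hsub
  have := Finset.card_le_card hsub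
  rw [Assembly.card_translate] at *
  omega

theorem not_nearPerfectlyAssembles_of_succ_mul_card_le {T : Finset Tile} {str : ℕ → ℕ}
    {τ h : ℕ} {P : ℕ → Finset (ℤ × ℤ)} (hh : 0 < h) (h0 : 0 < (P 0).card)
    (hg : ∀ i, (h + 1) * (P i).card ≤ (P (i + 1)).card) :
    ¬ NearPerfectlyAssembles T str τ h P := by
  rintro ⟨-, ⟨c, hfill⟩, ⟨c', hnear⟩⟩
  have hlt := lt_apply_of_succ_mul_le hh h0 hg
  have hbound : ∀ A, HamProducible T str τ h A → A.dom.card ≤ (P c').card := by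
    intro A hA
    refine HamProducible.card_le_of_gap ((Nat.zero_le c').trans_lt (hlt c')) ?_ hA
    intro B hB hBle
    obtain ⟨v, j, hsub, hmiss⟩ := hnear B hB
    obtain ⟨hle, hge⟩ := card_le_card_add_of_translate_subset hsub hmiss
    exact le_of_near_of_succ_mul_le hg (hlt c') hle hge hBle
  set N := (P c').card + c
  obtain ⟨A, hA, v, hsub, hmiss⟩ := hfill N
  have := (card_le_card_add_of_translate_subset hsub hmiss).2
  have := hbound A hA
  have := hlt N
  omega

lemma sierpTri_bounds (i : ℕ) {p : ℤ × ℤ} (hp : p ∈ sierpTri i) :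
    -(2 : ℤ) ^ i ≤ p.1 ∧ p.1 < 2 ^ i ∧ 0 ≤ p.2 ∧ p.2 < 2 ^ (i + 1) := by
  induction i generalizing p with
  | zero => revert p; decide
  | succ i ih =>
    have h2i : (0 : ℤ) < 2 ^ i := by positivity
    have hpow : (2 : ℤ) ^ (i + 1 + 1) = 2 ^ (i + 1) + 2 ^ (i + 1) := by ring
    rw [pow_succ (2 : ℤ) i, hpow]
    simp only [sierpTri, Finset.mem_union, Finset.mem_image] at hp
    rcases hp with (hp | ⟨q, hq, rfl⟩) | ⟨q, hq, rfl⟩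
    · obtain ⟨h1, h2, h3, h4⟩ := ih hp
      refine ⟨by linarith, by linarith, h3, by linarith⟩
    all_goals
      obtain ⟨h1, h2, h3, h4⟩ := ih hq
      simp only [Prod.fst_add, Prod.snd_add]
      refine ⟨by linarith, by linarith, by linarith, by linarith⟩

lemma sierpTri_card (i : ℕ) : (sierpTri i).card = 4 * 3 ^ i := by
  induction i with
  | zero => decide
  | succ i ih =>
    set S := sierpTri i
    set R := S.image (· + ((2 : ℤ) ^ i, 2 ^ (i + 1)))
    set L := S.image (· + (-(2 : ℤ) ^ i, 2 ^ (i + 1)))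
    -- `S` lies below height `2^(i+1)` and the translates above it; `R` and `L` are separated
    -- by the vertical line `x = 2^i`.
    have hSR : Disjoint S R := Finset.disjoint_right.2 fun p hpR hpS => by
      obtain ⟨q, hq, rfl⟩ := Finset.mem_image.1 hpR
      have := (sierpTri_bounds i hpS).2.2.2
      have := (sierpTri_bounds i hq).2.2.1
      simp only [Prod.snd_add] at *
      linarith
    have hSL : Disjoint S L := Finset.disjoint_right.2 fun p hpL hpS => by
      obtain ⟨q, hq, rfl⟩ := Finset.mem_image.1 hpL
      have := (sierpTri_bounds i hpS).2.2.2
      have := (sierpTri_bounds i hq).2.2.1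
      simp only [Prod.snd_add] at *
      linarith
    have hRL : Disjoint R L := Finset.disjoint_left.2 fun p hpR hpL => by
      obtain ⟨q, hq, rfl⟩ := Finset.mem_image.1 hpR
      obtain ⟨r, hr, hrq⟩ := Finset.mem_image.1 hpL
      have := (sierpTri_bounds i hq).1
      have := (sierpTri_bounds i hr).2.1
      have : r.1 + -(2 : ℤ) ^ i = q.1 + 2 ^ i := congrArg Prod.fst hrq
      linarith
    rw [sierpTri, Finset.card_union_of_disjoint (Finset.disjoint_union_left.2 ⟨hSL, hRL⟩),
      Finset.card_union_of_disjoint hSR, Finset.card_image_of_injective _ (add_left_injective _),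
      Finset.card_image_of_injective _ (add_left_injective _), ih]
    ring

/-- For every `h < 3`, no `h`-HAM system near-perfectly
assembles the discrete Sierpinski triangle `S_∞` with respect to its stage
sequence: at least 3 hands are required. -/
theorem sierpinski_triangle_near_perfect_needs_three_hands :
    ∀ h : ℕ, 0 < h → h < 3 →
      ∀ (T : Finset Tile) (str : ℕ → ℕ) (τ : ℕ),
        str 0 = 0 → 0 < τ →
        ¬ NearPerfectlyAssembles T str τ h sierpTri := by
  intro h hh h3 T str τ _ _
  refine not_nearPerfectlyAssembles_of_succ_mul_card_le hh (by simp [sierpTri_card]) fun i => ?_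
  rw [sierpTri_card, sierpTri_card, pow_succ]
  nlinarith [pow_pos (three_pos : (0 : ℕ) < 3) i]
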